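/- Let a, b, c, d, e, f be integers such that the four triples (a,b,c), (c,d,e), (a,e,f), (b,d,f) are admissible, and write x̄ := n−1−x for each integer x. Assume the two inverted binomial factors are nonzero: [2c; c+e−d] ≠ 0 and [2c̄; c̄+ē−d̄] ≠ 0. Then the tetrahedral 6j-symbols satisfy {a,b,c;d,e,f}_tet · {ā,b̄,c̄;d̄,ē,f̄}_tet = {a,b̄,c;d,e,f}_tet · {ā,b,c̄;d̄,ē,f̄}_tet. -/

import Mathlib

/-!
Write `x̄ = n - 1 - x`. Since `{n - x} = {x}`, quantum factorials satisfy the reflection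
`{k}! {n-1-k}! = {n-1}!`. In the product of a symbol with its barred partner, the `b`-dependent
factorials `{a+b-c}! {ā+b̄-c̄}!` and `{b+d-f}! {b̄+d̄-f̄}!` therefore collapse to `{n-1}!`, and
`[2c; ·] [2c̄; ·]` is `1` or `0` according as `2c = n - 1` or not, because a binomial with top
entry at least `n` contains the factor `{n} = 0`. In the sum, `b` enters only through
`[β+γ-z; β] [δ+z; ε]` with `β = b+f-d`, `ε = d+f-b`; multiplied by `{β}! {ε}!` this becomes
`{n-1}! {δ+z}! / ({γ-z}! {δ+z-ε}! {δ+z-ε'}!)` with `ε' = d+f-b̄`, which is symmetric under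
`b ↔ b̄`, as is the summation range. The weights `{β}! {ε}!` attached to a symbol and to its barred
partner pair off to `{n-1}!` by reflection as well, so they cancel.
-/

/-- The quantum number `{a} = ξ^a - ξ^{-a}` where `ξ = exp(πi/n)`. -/
noncomputable def qnum (n : ℕ) (a : ℂ) : ℂ :=
  Complex.exp (Real.pi * Complex.I * a / n) - Complex.exp (-(Real.pi * Complex.I * a) / n)

/-- The quantum factorial `{k}! = ∏_{j=1}^k {j}`. -/
noncomputable def qfact (n k : ℕ) : ℂ :=
  ∏ j ∈ Finset.range k, qnum n (j + 1)

/-- The quantum binomial `[a; a-k] = ∏_{j=0}^{k-1} {a-j}/{a-k-j}` (top entry `a`,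
difference of the two entries the natural number `k`), an empty product being `1`. -/
noncomputable def qbinom (n : ℕ) (a : ℂ) (k : ℕ) : ℂ :=
  ∏ j ∈ Finset.range k, qnum n (a - j) / qnum n ((k : ℂ) - j)

/-- The quantum binomial `[a; b]` for integer entries. -/
noncomputable def qbinomZ (n : ℕ) (a b : ℤ) : ℂ :=
  qbinom n (a : ℂ) (a - b).toNat

/-- A triple of integers `(i,j,k)` is admissible. -/
def Admissible (n : ℕ) (i j k : ℤ) : Prop :=
  0 < i ∧ i < (n : ℤ) - 1 ∧ 0 < j ∧ j < (n : ℤ) - 1 ∧ 0 < k ∧ k < (n : ℤ) - 1 ∧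
  (n : ℤ) - 1 < i + j + k ∧ i + j + k < 2 * ((n : ℤ) - 1) ∧
  0 < i + j - k ∧ i + j - k < (n : ℤ) - 1 ∧
  0 < j + k - i ∧ j + k - i < (n : ℤ) - 1 ∧
  0 < k + i - j ∧ k + i - j < (n : ℤ) - 1

/-- The tetrahedral 6j-symbol `{a,b,c;d,e,f}_tet` (the deformed formula for integer
colors, with summation range `s ≤ z ≤ S`). -/
noncomputable def tet6j (n : ℕ) (a b c d e f : ℤ) : ℂ :=
  (-1 : ℂ) ^ (n - 1) *
    (qfact n (c + d - e).toNat * qfact n (a + b - c).toNat) /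
    (qfact n (b + d - f).toNat * qfact n (a + f - e).toNat) *
    qbinomZ n (2 * c) (a + b + c + 1 - n) * (qbinomZ n (2 * c) (c + e - d))⁻¹ *
    ∑ z ∈ Finset.Icc
        (max (max 0 ((n : ℤ) - 1 - 2 * e))
          (max ((d + f - b) - (d + e - c)) ((b + f - d) + (c + d - e) - ((n : ℤ) - 1))))
        (min (min (c + d - e) (a + f - e))
          (min ((n : ℤ) - 1 - (a + e - f)) ((n : ℤ) - 1 - (d + e - c)))),
      qbinomZ n (a + e + f + 1 - n) (2 * e + z + 1 - n) *
      qbinomZ n (a + e - f + z) (a + e - f) *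
      qbinomZ n ((b + f - d) + (c + d - e) - z) (b + f - d) *
      qbinomZ n ((d + e - c) + z) (d + f - b)

open Complex Finset

theorem mul_eq_mul_of_mul_eq_mul {R : Type*} [CommRing R] [IsDomain R]
    {k₁ k₂ k₃ k₄ s₁ s₂ s₃ s₄ : R} (h₁ : k₁ * s₁ = k₃ * s₃) (h₂ : k₄ * s₄ = k₂ * s₂)
    (hk : k₁ * k₂ = k₃ * k₄) (hk₀ : k₁ * k₂ ≠ 0) : s₁ * s₂ = s₃ * s₄ :=
  mul_left_cancel₀ hk₀ <| by linear_combination (k₂ * s₂) * h₁ - (k₃ * s₃) * h₂ - (s₃ * s₄) * hk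

theorem mul_div_mul_mul_eq {K : Type*} [Field K] {κ κ' X₁ X₂ X₃ X₄ Y₁ Y₂ Y₃ Y₄ B₁ B₂ B₃ B₄
    S₁ S₂ S₃ S₄ : K} (hX : X₁ * X₂ = X₃ * X₄) (hY : Y₁ * Y₂ = Y₃ * Y₄)
    (hB : B₁ * B₂ = B₃ * B₄) (hS : S₁ * S₂ = S₃ * S₄) :
    κ * (X₁ / Y₁ * B₁ * S₁) * (κ' * (X₂ / Y₂ * B₂ * S₂)) =
      κ * (X₃ / Y₃ * B₃ * S₃) * (κ' * (X₄ / Y₄ * B₄ * S₄)) :=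
  calc _ = κ * κ' * (X₁ * X₂) / (Y₁ * Y₂) * (B₁ * B₂) * (S₁ * S₂) := by ring
    _ = κ * κ' * (X₃ * X₄) / (Y₃ * Y₄) * (B₃ * B₄) * (S₃ * S₄) := by rw [hX, hY, hB, hS]
    _ = _ := by ring

section

variable {n : ℕ}

theorem qnum_eq_two_mul_I_mul_sin (x : ℂ) : qnum n x = 2 * I * sin (Real.pi * x / n) := by
  rw [qnum, Complex.sin]
  ring_nf
  rw [I_sq]
  ring_nf

theorem qnum_natCast_sub (x : ℂ) : qnum n (n - x) = qnum n x := by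
  rcases eq_or_ne n 0 with rfl | hn
  · -- `qnum 0` vanishes identically, since `x / 0 = 0`
    simp [qnum]
  · have hn' : (n : ℂ) ≠ 0 := Nat.cast_ne_zero.2 hn
    rw [qnum_eq_two_mul_I_mul_sin, qnum_eq_two_mul_I_mul_sin, ← Complex.sin_pi_sub]
    congr 2
    field_simp
    ring

theorem qnum_self : qnum n n = 0 := by
  simpa [qnum] using qnum_natCast_sub (n := n) 0

theorem qnum_natCast_ne_zero {m : ℕ} (h0 : 0 < m) (hm : m < n) : qnum n m ≠ 0 := by
  have hm0 : (0 : ℝ) < m := by exact_mod_cast h0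
  have hn0 : (0 : ℝ) < n := by exact_mod_cast h0.trans hm
  have hpos : 0 < Real.pi * m / n := by positivity
  have hlt : Real.pi * m / n < Real.pi := by
    rw [div_lt_iff₀ hn0]
    exact mul_lt_mul_of_pos_left (by exact_mod_cast hm) Real.pi_pos
  rw [qnum_eq_two_mul_I_mul_sin,
    show (Real.pi : ℂ) * m / n = (Real.pi * m / n : ℝ) by push_cast; rfl, ← ofReal_sin]
  exact mul_ne_zero (mul_ne_zero two_ne_zero I_ne_zero)
    (ofReal_ne_zero.2 (Real.sin_pos_of_pos_of_lt_pi hpos hlt).ne')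

theorem qfact_ne_zero {k : ℕ} (hk : k < n) : qfact n k ≠ 0 :=
  prod_ne_zero_iff.2 fun j hj => by
    exact_mod_cast qnum_natCast_ne_zero (n := n) (m := j + 1) j.succ_pos
      (by rw [mem_range] at hj; omega)

theorem qfact_add (m k : ℕ) :
    qfact n (m + k) = qfact n m * ∏ j ∈ range k, qnum n ((m + j : ℕ) + 1) := by
  rw [qfact, prod_range_add, qfact]

theorem prod_range_qnum_natCast_add_sub (m k : ℕ) :
    ∏ j ∈ range k, qnum n ((m + k : ℕ) - j) = ∏ j ∈ range k, qnum n ((m + j : ℕ) + 1) := by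
  rw [← prod_range_reflect]
  refine prod_congr rfl fun j hj => ?_
  have hjk : j < k := mem_range.1 hj
  congr 1
  rw [Nat.cast_sub (by omega), Nat.cast_sub (by omega)]
  push_cast
  ring

theorem prod_range_qnum_natCast_sub (k : ℕ) :
    ∏ j ∈ range k, qnum n ((k : ℂ) - j) = qfact n k := by
  simpa [qfact] using prod_range_qnum_natCast_add_sub (n := n) 0 k

theorem qfact_mul_qfact_sub {k : ℕ} (hk : k ≤ n - 1) :
    qfact n k * qfact n (n - 1 - k) = qfact n (n - 1) := by
  conv_rhs => rw [show n - 1 = k + (n - 1 - k) by omega, qfact_add]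
  congr 1
  rw [← prod_range_qnum_natCast_sub]
  refine prod_congr rfl fun j hj => ?_
  have hj : j < n - 1 - k := mem_range.1 hj
  rw [← qnum_natCast_sub]
  congr 1
  rw [Nat.cast_sub (by omega), Nat.cast_sub (by omega)]
  push_cast
  ring

theorem qfact_toNat_mul_qfact_toNat {x y : ℤ} (hx : 0 ≤ x) (hy : 0 ≤ y) (h : x + y = n - 1) :
    qfact n x.toNat * qfact n y.toNat = qfact n (n - 1) := by
  rw [show y.toNat = n - 1 - x.toNat by omega]
  exact qfact_mul_qfact_sub (by omega)

theorem qfact_toNat_mul_qfact_toNat_eq {x y x' y' : ℤ} (hx : 0 ≤ x) (hy : 0 ≤ y)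
    (h : x + y = n - 1) (hx' : 0 ≤ x') (hy' : 0 ≤ y') (h' : x' + y' = n - 1) :
    qfact n x.toNat * qfact n y.toNat = qfact n x'.toNat * qfact n y'.toNat := by
  rw [qfact_toNat_mul_qfact_toNat hx hy h, qfact_toNat_mul_qfact_toNat hx' hy' h']

theorem qbinom_mul_qfact_mul_qfact {k : ℕ} (hk : k < n) (m : ℕ) :
    qbinom n ((m + k : ℕ) : ℂ) k * (qfact n k * qfact n m) = qfact n (m + k) := by
  rw [qbinom, prod_div_distrib, prod_range_qnum_natCast_sub, prod_range_qnum_natCast_add_sub,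
    div_mul_eq_mul_div, mul_left_comm, mul_div_cancel_left₀ _ (qfact_ne_zero hk), qfact_add,
    mul_comm]

theorem qbinomZ_mul_qfact_mul_qfact {A B : ℤ} (hB : 0 ≤ B) (hBA : B ≤ A) (hAB : A - B < n) :
    qbinomZ n A B * (qfact n (A - B).toNat * qfact n B.toNat) = qfact n A.toNat := by
  have hA : (A : ℂ) = ((B.toNat + (A - B).toNat : ℕ) : ℂ) := by
    exact_mod_cast (by omega : A = ((B.toNat + (A - B).toNat : ℕ) : ℤ))
  rw [qbinomZ, hA, qbinom_mul_qfact_mul_qfact (by omega)]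
  congr 1
  omega

theorem qbinomZ_sub_one {B : ℤ} (hB : 0 ≤ B) (hBn : B ≤ n - 1) : qbinomZ n (n - 1) B = 1 := by
  have h := qbinomZ_mul_qfact_mul_qfact (n := n) hB hBn (by omega)
  rw [qfact_toNat_mul_qfact_toNat (by omega) hB (by omega),
    show ((n : ℤ) - 1).toNat = n - 1 by omega] at h
  exact (mul_eq_right₀ (qfact_ne_zero (by omega))).1 h

theorem qbinomZ_eq_zero {A B : ℤ} (hB : B < n) (hA : n ≤ A) : qbinomZ n A B = 0 := by
  refine prod_eq_zero (i := (A - n).toNat) (mem_range.2 (by omega)) ?_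
  have h : (((A - n).toNat : ℕ) : ℂ) = A - n := by
    rw [← Int.cast_natCast, Int.toNat_of_nonneg (by omega)]
    push_cast
    ring
  rw [h, sub_sub_cancel, qnum_self, zero_div]

theorem qbinomZ_mul_qbinomZ {A A' B B' : ℤ} (hAA' : A + A' = 2 * (n - 1))
    (hB : 0 ≤ B) (hBn : B < n) (hB' : 0 ≤ B') (hBn' : B' < n) :
    qbinomZ n A B * qbinomZ n A' B' = if A = n - 1 then 1 else 0 := by
  rcases lt_trichotomy A (n - 1) with h | h | h
  · rw [qbinomZ_eq_zero (A := A') hBn' (by omega), mul_zero, if_neg h.ne]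
  · rw [if_pos h, h, qbinomZ_sub_one hB (by omega), show A' = n - 1 by omega,
      qbinomZ_sub_one hB' (by omega), one_mul]
  · rw [qbinomZ_eq_zero hBn (by omega), zero_mul, if_neg h.ne']

theorem qfact_mul_qfact_mul_qbinomZ_mul_qbinomZ {A β u v ε ε' : ℤ} (hA : A = β + u)
    (hβ : 0 ≤ β) (hu : 0 ≤ u) (hε : 0 ≤ ε) (hεv : ε ≤ v) (hε'v : ε' ≤ v) (hv : v < n)
    (hsum : A + (v - ε') = n - 1) :
    qfact n β.toNat * qfact n ε.toNat * (qbinomZ n A β * qbinomZ n v ε) =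
      qfact n (n - 1) * qfact n v.toNat /
        (qfact n u.toNat * qfact n (v - ε).toNat * qfact n (v - ε').toNat) := by
  have hAβ := qbinomZ_mul_qfact_mul_qfact (n := n) hβ (by omega : β ≤ A) (by omega)
  have hvε := qbinomZ_mul_qfact_mul_qfact (n := n) hε hεv (by omega)
  rw [show A - β = u by omega] at hAβ
  have hden : qfact n u.toNat * qfact n (v - ε).toNat * qfact n (v - ε').toNat ≠ 0 :=
    mul_ne_zero (mul_ne_zero (qfact_ne_zero (by omega)) (qfact_ne_zero (by omega)))
      (qfact_ne_zero (by omega))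
  rw [eq_div_iff hden, ← qfact_toNat_mul_qfact_toNat (by omega) (by omega) hsum, ← hAβ, ← hvε]
  ring

theorem qfact_mul_qfact_mul_qbinomZ_mul_qbinomZ_eq {A A' β β' u v ε ε' : ℤ}
    (hA : A = β + u) (hA' : A' = β' + u) (hβ : 0 ≤ β) (hβ' : 0 ≤ β') (hu : 0 ≤ u)
    (hε : 0 ≤ ε) (hε' : 0 ≤ ε') (hεv : ε ≤ v) (hε'v : ε' ≤ v) (hv : v < n)
    (hsum : A + (v - ε') = n - 1) (hsum' : A' + (v - ε) = n - 1) :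
    qfact n β.toNat * qfact n ε.toNat * (qbinomZ n A β * qbinomZ n v ε) =
      qfact n β'.toNat * qfact n ε'.toNat * (qbinomZ n A' β' * qbinomZ n v ε') := by
  rw [qfact_mul_qfact_mul_qbinomZ_mul_qbinomZ hA hβ hu hε hεv hε'v hv hsum,
    qfact_mul_qfact_mul_qbinomZ_mul_qbinomZ hA' hβ' hu hε' hε'v hεv hv hsum',
    mul_right_comm (qfact n u.toNat)]

theorem Admissible.bar₂₃ {i j k : ℤ} (h : Admissible n i j k) :
    Admissible n i (n - 1 - j) (n - 1 - k) := by
  unfold Admissible at *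
  omega

noncomputable def tet6jSum (n : ℕ) (a b c d e f : ℤ) : ℂ :=
  ∑ z ∈ Finset.Icc
      (max (max 0 ((n : ℤ) - 1 - 2 * e))
        (max ((d + f - b) - (d + e - c)) ((b + f - d) + (c + d - e) - ((n : ℤ) - 1))))
      (min (min (c + d - e) (a + f - e))
        (min ((n : ℤ) - 1 - (a + e - f)) ((n : ℤ) - 1 - (d + e - c)))),
    qbinomZ n (a + e + f + 1 - n) (2 * e + z + 1 - n) *
    qbinomZ n (a + e - f + z) (a + e - f) *
    qbinomZ n ((b + f - d) + (c + d - e) - z) (b + f - d) *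
    qbinomZ n ((d + e - c) + z) (d + f - b)

theorem tet6j_eq_mul (a b c d e f : ℤ) :
    tet6j n a b c d e f =
      (-1) ^ (n - 1) * qfact n (c + d - e).toNat / qfact n (a + f - e).toNat *
          (qbinomZ n (2 * c) (c + e - d))⁻¹ *
        (qfact n (a + b - c).toNat / qfact n (b + d - f).toNat *
          qbinomZ n (2 * c) (a + b + c + 1 - n) * tet6jSum n a b c d e f) := by
  rw [tet6j, tet6jSum]
  ring

theorem qfact_mul_qfact_mul_tet6jSum_bar_b {b d f : ℤ} (h : Admissible n b d f) (a c e : ℤ) :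
    qfact n (b + f - d).toNat * qfact n (d + f - b).toNat * tet6jSum n a b c d e f =
      qfact n (n - 1 - b + f - d).toNat * qfact n (d + f - (n - 1 - b)).toNat *
        tet6jSum n a (n - 1 - b) c d e f := by
  unfold Admissible at h
  rw [tet6jSum, tet6jSum, mul_sum, mul_sum]
  refine sum_congr (by congr 1; omega) fun z hz => ?_
  rw [mem_Icc] at hz
  have key := qfact_mul_qfact_mul_qbinomZ_mul_qbinomZ_eq (n := n)
    (A := b + f - d + (c + d - e) - z) (A' := n - 1 - b + f - d + (c + d - e) - z)
    (u := c + d - e - z) (v := d + e - c + z) (β := b + f - d) (β' := n - 1 - b + f - d)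
    (ε := d + f - b) (ε' := d + f - (n - 1 - b)) (by ring) (by ring) (by omega) (by omega) (by omega) (by omega)
    (by omega) (by omega) (by omega) (by omega) (by omega) (by omega)
  linear_combination (qbinomZ n (a + e + f + 1 - n) (2 * e + z + 1 - n) *
    qbinomZ n (a + e - f + z) (a + e - f)) * key

theorem tet6jSum_mul_tet6jSum_bar_b {b d f : ℤ} (h : Admissible n b d f) (a c e : ℤ) :
    tet6jSum n a b c d e f *
        tet6jSum n (n - 1 - a) (n - 1 - b) (n - 1 - c) (n - 1 - d) (n - 1 - e) (n - 1 - f) =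
      tet6jSum n a (n - 1 - b) c d e f *
        tet6jSum n (n - 1 - a) b (n - 1 - c) (n - 1 - d) (n - 1 - e) (n - 1 - f) := by
  refine mul_eq_mul_of_mul_eq_mul (qfact_mul_qfact_mul_tet6jSum_bar_b h a c e)
    (qfact_mul_qfact_mul_tet6jSum_bar_b h.bar₂₃ _ _ _) ?_ ?_
  · unfold Admissible at h
    rw [mul_mul_mul_comm, mul_mul_mul_comm (qfact n (n - 1 - b + f - d).toNat)]
    congr 1 <;> exact qfact_toNat_mul_qfact_toNat_eq (by omega) (by omega) (by omega) (by omega)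
      (by omega) (by omega)
  · unfold Admissible at h
    exact mul_ne_zero (mul_ne_zero (qfact_ne_zero (by omega)) (qfact_ne_zero (by omega)))
      (mul_ne_zero (qfact_ne_zero (by omega)) (qfact_ne_zero (by omega)))

theorem qbinomZ_mul_qbinomZ_bar_b {a b c : ℤ} (h : Admissible n a b c) :
    qbinomZ n (2 * c) (a + b + c + 1 - n) *
        qbinomZ n (2 * (n - 1 - c)) ((n - 1 - a) + (n - 1 - b) + (n - 1 - c) + 1 - n) =
      qbinomZ n (2 * c) (a + (n - 1 - b) + c + 1 - n) *
        qbinomZ n (2 * (n - 1 - c)) ((n - 1 - a) + b + (n - 1 - c) + 1 - n) := by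
  unfold Admissible at h
  rw [qbinomZ_mul_qbinomZ (by omega) (by omega) (by omega) (by omega) (by omega),
    qbinomZ_mul_qbinomZ (by omega) (by omega) (by omega) (by omega) (by omega)]

end

theorem tet6j_bar_b_general (n : ℕ) (a b c d e f : ℤ)
    (habc : Admissible n a b c) (hbdf : Admissible n b d f) :
    tet6j n a b c d e f *
      tet6j n ((n : ℤ) - 1 - a) ((n : ℤ) - 1 - b) ((n : ℤ) - 1 - c)
        ((n : ℤ) - 1 - d) ((n : ℤ) - 1 - e) ((n : ℤ) - 1 - f) =
    tet6j n a ((n : ℤ) - 1 - b) c d e f *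
      tet6j n ((n : ℤ) - 1 - a) b ((n : ℤ) - 1 - c)
        ((n : ℤ) - 1 - d) ((n : ℤ) - 1 - e) ((n : ℤ) - 1 - f) := by
  simp only [tet6j_eq_mul]
  refine mul_div_mul_mul_eq ?_ ?_ (qbinomZ_mul_qbinomZ_bar_b habc)
    (tet6jSum_mul_tet6jSum_bar_b hbdf a c e) <;>
  · unfold Admissible at habc hbdf
    exact qfact_toNat_mul_qfact_toNat_eq (by omega) (by omega) (by omega) (by omega) (by omega)
      (by omega)

/-- Lemma B.1 / Lemma `prop01`: writing `x̄ = n-1-x`, for admissible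
integer colors one has
`{a,b,c;d,e,f}_tet ⬝ {ā,b̄,c̄;d̄,ē,f̄}_tet = {a,b̄,c;d,e,f}_tet ⬝ {ā,b,c̄;d̄,ē,f̄}_tet`. -/
theorem tet6j_bar_b (n : ℕ) (hn : 2 ≤ n) (a b c d e f : ℤ)
    (habc : Admissible n a b c) (hcde : Admissible n c d e)
    (haef : Admissible n a e f) (hbdf : Admissible n b d f)
    (h1 : qbinomZ n (2 * c) (c + e - d) ≠ 0)
    (h2 : qbinomZ n (2 * ((n : ℤ) - 1 - c))
        (((n : ℤ) - 1 - c) + ((n : ℤ) - 1 - e) - ((n : ℤ) - 1 - d)) ≠ 0) :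
    tet6j n a b c d e f *
      tet6j n ((n : ℤ) - 1 - a) ((n : ℤ) - 1 - b) ((n : ℤ) - 1 - c)
        ((n : ℤ) - 1 - d) ((n : ℤ) - 1 - e) ((n : ℤ) - 1 - f) =
    tet6j n a ((n : ℤ) - 1 - b) c d e f *
      tet6j n ((n : ℤ) - 1 - a) b ((n : ℤ) - 1 - c)
        ((n : ℤ) - 1 - d) ((n : ℤ) - 1 - e) ((n : ℤ) - 1 - f) :=
  tet6j_bar_b_general n a b c d e f habc hbdf
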